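/- arXiv:1907.11006 — 8 statements merged into one kernel-verified Lean document; each statement's English description precedes it below -/
import Mathlib

section
/- Every candidate orbit (z_n)_{n≥0} of complex numbers is realised by some continuous map f : ℂ → ℂ, i.e., there exists a continuous f : ℂ → ℂ with f(z_n) = z_{n+1} for all n ≥ 0. -/
/-!
Let `g w` be the common limit of `z (n_j + 1)` over all `n_j` with `z (n_j) → w`; in filter
language, `z (· + 1)` tends to `g w` along `comap z (𝓝 w)`. Constant subsequences give
`g (z n) = z (n + 1)`, and a function defined by such limits is continuous on
`closure (range z)`. The Tietze extension theorem extends `g` from this closed set to all of `ℂ`.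
-/

open Filter Topology

/-- A sequence of complex numbers is a *candidate orbit* if, whenever a
subsequence converges to a point `w`, the shifted subsequence converges to a
limit depending only on `w`. -/
def CandidateOrbit (z : ℕ → ℂ) : Prop :=
  ∀ w : ℂ, ∃ w' : ℂ, ∀ nj : ℕ → ℕ,
    Tendsto (fun j => z (nj j)) atTop (𝓝 w) →
    Tendsto (fun j => z (nj j + 1)) atTop (𝓝 w')

open Set

section

variable {α X Y : Type*} [TopologicalSpace X] [TopologicalSpace Y] {e : α → X} {h : α → Y}
  {g : X → Y}

theorem comap_nhds_neBot_of_mem_closure_range {x : X} (hx : x ∈ closure (range e)) :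
    NeBot (comap e (𝓝 x)) :=
  comap_neBot_iff.mpr fun t ht => by
    obtain ⟨_, hxt, a, rfl⟩ := mem_closure_iff_nhds.mp hx t ht
    exact ⟨a, hxt⟩

theorem eq_of_tendsto_comap_nhds [T2Space Y] {a : α}
    (hg : Tendsto h (comap e (𝓝 (e a))) (𝓝 (g (e a)))) : g (e a) = h a :=
  tendsto_nhds_unique (hg.comp (tendsto_comap_iff.mpr (tendsto_pure_nhds e a)))
    (tendsto_pure_nhds h a)

/-- If `h` maps `e⁻¹' U` into a closed neighbourhood `V'` of `g x`, then so does `g` map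
`U ∩ closure (range e)`, since each such `g y` is a limit of values of `h` on `e⁻¹' U`. -/
theorem continuousOn_closure_range_of_tendsto_comap_nhds [RegularSpace Y]
    (hg : ∀ x ∈ closure (range e), Tendsto h (comap e (𝓝 x)) (𝓝 (g x))) :
    ContinuousOn g (closure (range e)) := by
  intro x hx V hV
  obtain ⟨V', hV'x, hV'_closed, hV'V⟩ := exists_mem_nhds_isClosed_subset hV
  obtain ⟨U, ⟨hxU, hU_open⟩, hUV'⟩ :=
    (hg x hx).basis_left ((nhds_basis_opens x).comap e) V' hV'x
  refine mem_nhdsWithin.mpr ⟨U, hU_open, hxU, fun y ⟨hyU, hy⟩ => hV'V ?_⟩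
  have := comap_nhds_neBot_of_mem_closure_range hy
  exact hV'_closed.mem_of_tendsto (hg y hy)
    (mem_of_superset (preimage_mem_comap (hU_open.mem_nhds hyU)) hUV')

end

theorem CandidateOrbit.exists_tendsto_comap_nhds {z : ℕ → ℂ} (hz : CandidateOrbit z) :
    ∃ g : ℂ → ℂ, ∀ w, Tendsto (fun n => z (n + 1)) (comap z (𝓝 w)) (𝓝 (g w)) := by
  choose g hg using hz
  exact ⟨g, fun w => tendsto_iff_seq_tendsto.mpr fun nj hnj =>
    hg w nj (tendsto_comap_iff.mp hnj)⟩

theorem stmt_1 (z : ℕ → ℂ) (hz : CandidateOrbit z) :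
    ∃ f : ℂ → ℂ, Continuous f ∧ ∀ n : ℕ, f (z n) = z (n + 1) := by
  obtain ⟨g, hg⟩ := hz.exists_tendsto_comap_nhds
  have hg_cont := continuousOn_closure_range_of_tendsto_comap_nhds fun w _ => hg w
  obtain ⟨f, hf⟩ := ContinuousMap.exists_restrict_eq isClosed_closure ⟨_, hg_cont.domRestrict⟩
  refine ⟨f, f.continuous, fun n => ?_⟩
  have hfg := ContinuousMap.congr_fun hf ⟨z n, subset_closure (mem_range_self n)⟩
  exact hfg.trans (eq_of_tendsto_comap_nhds (hg (z n)))
end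

section
/- Suppose a candidate orbit (z_n)_{n≥0} has {z_n : n ≥ 0} not dense in ℂ. Then there exist at least two distinct continuous maps f, g : ℂ → ℂ realising the orbit (in fact infinitely many). -/
/-!
Let `W w` be the common limit of `z (n_j + 1)` along subsequences with `z n_j → w`. Then
`W (z n) = z (n + 1)`, and a diagonal argument shows that `W` is continuous on the closure of the
orbit, so Tietze's theorem extends it to a continuous `F : ℂ → ℂ` realising the orbit. Adding to `F`
any nonzero multiple of the distance to the orbit gives further realisations, and they differ from
`F` because the orbit is not dense.
-/

open Filter Topology Set Metric

universe u

def IsShiftLimitMap {X : Type*} [TopologicalSpace X] (z : ℕ → X) (W : X → X) : Prop :=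
  ∀ w : X, ∀ nj : ℕ → ℕ,
    Tendsto (fun j => z (nj j)) atTop (𝓝 w) → Tendsto (fun j => z (nj j + 1)) atTop (𝓝 (W w))

theorem CandidateOrbit.exists_isShiftLimitMap {z : ℕ → ℂ} (hz : CandidateOrbit z) :
    ∃ W, IsShiftLimitMap z W := by
  choose W hW using hz
  exact ⟨W, hW⟩

namespace IsShiftLimitMap

theorem apply_eq {X : Type*} [TopologicalSpace X] [T2Space X] {z : ℕ → X} {W : X → X}
    (hW : IsShiftLimitMap z W) (n : ℕ) : W (z n) = z (n + 1) :=
  tendsto_nhds_unique (hW (z n) (fun _ => n) tendsto_const_nhds) tendsto_const_nhds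

variable {X : Type u} [MetricSpace X] {z : ℕ → X} {W : X → X}

theorem exists_dist_lt (hW : IsShiftLimitMap z W) {w : X} (hw : w ∈ closure (range z))
    {ε : ℝ} (hε : 0 < ε) : ∃ m, dist (z m) w < ε ∧ dist (z (m + 1)) (W w) < ε := by
  obtain ⟨x, hx, hxw⟩ := mem_closure_iff_seq_limit.mp hw
  choose nj hnj using hx
  have hzw : Tendsto (fun j => z (nj j)) atTop (𝓝 w) := by simpa only [hnj] using hxw
  obtain ⟨j, hj, hj'⟩ := ((tendsto_nhds.mp hzw ε hε).and
    (tendsto_nhds.mp (hW w nj hzw) ε hε)).exists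
  exact ⟨nj j, hj, hj'⟩

theorem continuous_domRestrict (hW : IsShiftLimitMap z W) :
    Continuous ((closure (range z)).domRestrict W) := by
  rw [continuous_iff_seqContinuous]
  intro u x hu
  have hux : Tendsto (fun k => (u k : X)) atTop (𝓝 x) := (continuous_subtype_val.tendsto x).comp hu
  have hδ : Tendsto (fun k : ℕ => 1 / ((k : ℝ) + 1)) atTop (𝓝 0) :=
    tendsto_one_div_add_atTop_nhds_zero_nat
  choose m hm hm' using fun k => hW.exists_dist_lt (u k).2 (Nat.one_div_pos_of_nat (n := k))
  -- diagonal argument: the orbit points `z (m k)` track `u k`, their successors track `W (u k)`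
  have hzx : Tendsto (fun k => z (m k)) atTop (𝓝 x) := by
    refine hux.congr_dist (squeeze_zero (fun _ => dist_nonneg) (fun k => ?_) hδ)
    rw [dist_comm]
    exact (hm k).le
  exact (hW x m hzx).congr_dist (squeeze_zero (fun _ => dist_nonneg) (fun k => (hm' k).le) hδ)

theorem exists_continuous_extension [TietzeExtension.{u} X] (hW : IsShiftLimitMap z W) :
    ∃ F : X → X, Continuous F ∧ ∀ n, F (z n) = z (n + 1) := by
  obtain ⟨F, hF⟩ :=
    (⟨_, hW.continuous_domRestrict⟩ : C(closure (range z), X)).exists_restrict_eq isClosed_closure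
  refine ⟨F, F.continuous, fun n => ?_⟩
  rw [← hW.apply_eq n]
  exact congr($hF ⟨z n, subset_closure (mem_range_self n)⟩)

end IsShiftLimitMap

theorem exists_continuous_ne_eqOn_of_not_dense {X E : Type*} [MetricSpace X]
    [NormedAddCommGroup E] [NormedSpace ℝ E] [Nontrivial E] {f : X → E} (hf : Continuous f)
    {s : Set X} (hs : s.Nonempty) (hd : ¬ Dense s) :
    ∃ g : X → E, Continuous g ∧ g ≠ f ∧ EqOn g f s := by
  obtain ⟨v, hv⟩ := exists_ne (0 : E)
  obtain ⟨c, hc⟩ := not_forall.mp hd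
  refine ⟨fun x => f x + infDist x s • v, hf.add ((continuous_infDist_pt s).smul continuous_const),
    fun h => ?_, fun x hx => by simp [infDist_zero_of_mem hx]⟩
  have hpos := (infDist_pos_iff_notMem_closure hs).mp hc
  have := congrFun h c
  simp only [add_eq_left, smul_eq_zero] at this
  exact this.elim hpos.ne' hv

theorem stmt_3 (z : ℕ → ℂ) (hz : CandidateOrbit z)
    (hnotdense : ¬ Dense (Set.range z)) :
    ∃ f g : ℂ → ℂ, f ≠ g ∧ Continuous f ∧ Continuous g ∧
      (∀ n : ℕ, f (z n) = z (n + 1)) ∧ (∀ n : ℕ, g (z n) = z (n + 1)) := by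
  obtain ⟨W, hW⟩ := hz.exists_isShiftLimitMap
  obtain ⟨F, hF, hFz⟩ := hW.exists_continuous_extension
  obtain ⟨g, hg, hgF, hgz⟩ :=
    exists_continuous_ne_eqOn_of_not_dense hF (range_nonempty z) hnotdense
  exact ⟨g, F, hgF, hg, hF, fun n => (hgz (mem_range_self n)).trans (hFz n), hFz⟩
end

section
/- Fix a real number a with 1 < a < 2 and set z_n = 2^{−a^n}. Then (z_n)_{n≥0} is not realised by any entire function: there is no entire f with f(z_n) = z_{n+1} for all n ≥ 0. -/
open Filter Topology

theorem stmt_13 (a : ℝ) (ha1 : 1 < a) (ha2 : a < 2) (z : ℕ → ℂ)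
    (hz : ∀ n : ℕ, z n = ((2 : ℝ) ^ (-(a ^ n)) : ℝ)) :
    ¬ ∃ f : ℂ → ℂ, Differentiable ℂ f ∧ ∀ n : ℕ, f (z n) = z (n + 1) := by
  rintro ⟨f, hf, hfz⟩
  set L : ℝ := Real.log 2 with hL
  have hLpos : 0 < L := Real.log_pos (by norm_num)
  have hzpos : ∀ n : ℕ, (0:ℝ) < (2 : ℝ) ^ (-(a ^ n)) := fun n =>
    Real.rpow_pos_of_pos (by norm_num) _
  have hzne : ∀ n : ℕ, z n ≠ 0 := by
    intro n
    rw [hz n]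
    exact_mod_cast (hzpos n).ne'
  -- a^n → ∞, so z n → 0
  have hpow : Tendsto (fun n : ℕ => a ^ n) atTop atTop :=
    tendsto_pow_atTop_atTop_of_one_lt ha1
  have hztend : Tendsto z atTop (𝓝 0) := by
    have h1 : Tendsto (fun n : ℕ => (2:ℝ) ^ (-(a ^ n))) atTop (𝓝 0) :=
      (tendsto_rpow_atBot_of_base_gt_one 2 (by norm_num)).comp
        (tendsto_neg_atTop_atBot.comp hpow)
    have := (Complex.continuous_ofReal.tendsto 0).comp h1
    simpa [Function.comp_def, funext hz] using this
  -- f 0 = 0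
  have hztend' : Tendsto (fun n => z (n + 1)) atTop (𝓝 0) :=
    hztend.comp (tendsto_add_atTop_nat 1)
  have hf0 : f 0 = 0 := by
    have h1 : Tendsto (fun n => f (z n)) atTop (𝓝 (f 0)) :=
      ((hf.continuous.tendsto 0).comp hztend)
    have h2 : Tendsto (fun n => f (z n)) atTop (𝓝 0) := by
      simpa [funext hfz] using hztend'
    exact tendsto_nhds_unique h1 h2
  have hfa : AnalyticAt ℂ f 0 := hf.analyticAt 0
  -- the order of f at 0 is a finite natural number p
  have hord : analyticOrderAt f 0 ≠ ⊤ := by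
    intro htop
    rw [analyticOrderAt_eq_top] at htop
    have := (hztend.eventually htop).exists
    obtain ⟨n, hn⟩ := this
    exact hzne (n + 1) (by rw [← hfz n, hn])
  obtain ⟨p, hp⟩ := WithTop.ne_top_iff_exists.mp hord
  obtain ⟨g, hg, hg0, hfg⟩ := (hfa.analyticOrderAt_eq_natCast (n := p)).mp hp.symm
  -- eventually, z (n+1) = (z n)^p * g (z n)
  have hev : ∀ᶠ n in atTop, z (n + 1) = (z n) ^ p * g (z n) := by
    filter_upwards [hztend.eventually hfg] with n hn
    rw [← hfz n, hn]; simp [smul_eq_mul]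
  -- hence log ‖g (z n)‖ = (p - a) * a^n * L eventually
  have hlog : ∀ᶠ n in atTop,
      Real.log ‖g (z n)‖ = ((p : ℝ) - a) * a ^ n * L := by
    filter_upwards [hev] with n hn
    have hgzn : g (z n) = z (n + 1) / (z n) ^ p := by
      field_simp [hzne n] at hn ⊢
      rw [hn]
    have h1 : ‖z n‖ = (2:ℝ) ^ (-(a ^ n)) := by
      rw [hz n, Complex.norm_real, Real.norm_eq_abs, abs_of_pos (hzpos n)]
    have h2 : ‖z (n+1)‖ = (2:ℝ) ^ (-(a ^ (n+1))) := by
      rw [hz (n+1), Complex.norm_real, Real.norm_eq_abs, abs_of_pos (hzpos (n+1))]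
    rw [hgzn, norm_div, norm_pow, h1, h2,
      Real.log_div (hzpos (n+1)).ne' (by positivity),
      Real.log_pow, Real.log_rpow (by norm_num), Real.log_rpow (by norm_num)]
    rw [pow_succ]
    ring
  -- g (z n) → g 0 ≠ 0, so log ‖g (z n)‖ converges
  have hgc : Tendsto (fun n => Real.log ‖g (z n)‖) atTop (𝓝 (Real.log ‖g 0‖)) := by
    have h1 : Tendsto (fun n => g (z n)) atTop (𝓝 (g 0)) :=
      (hg.continuousAt.tendsto).comp hztend
    exact (Real.continuousAt_log (by simpa using hg0)).tendsto.comp h1.norm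
  -- but (p - a) * a^n * L diverges in absolute value
  have hpa : ((p : ℝ) - a) ≠ 0 := by
    rcases le_or_gt p 1 with h | h
    · have : (p : ℝ) ≤ 1 := by exact_mod_cast h
      nlinarith
    · have : (2 : ℝ) ≤ (p : ℝ) := by exact_mod_cast h
      nlinarith
  have hdiv : Tendsto (fun n : ℕ => |((p : ℝ) - a) * a ^ n * L|) atTop atTop := by
    have h1 : Tendsto (fun n : ℕ => |((p:ℝ) - a) * L| * a ^ n) atTop atTop :=
      Tendsto.const_mul_atTop (by positivity) hpow
    refine h1.congr fun n => ?_
    rw [abs_mul, abs_mul, abs_mul, abs_of_pos (pow_pos (by linarith : (0:ℝ) < a) n)]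
    ring
  have hconv : Tendsto (fun n : ℕ => |((p : ℝ) - a) * a ^ n * L|) atTop
      (𝓝 |Real.log ‖g 0‖|) := by
    have := hgc.congr' hlog
    exact this.abs
  exact not_tendsto_nhds_of_tendsto_atTop hdiv _ hconv
end

section
/- Let μ, ν > 0, C > 1, and let (x_n) be a sequence of positive reals tending to 0 satisfying: (i) x_{n+1}/x_{n+2} ≤ C²(x_n/x_{n+1})^ν whenever n ≥ n₀ and x_n ≥ x_{n+1}, and (ii) (1/C²)(x_{n+1}/x_n)^μ ≤ x_{n+2}/x_{n+1} whenever n ≥ n₀ and x_n ≤ x_{n+1}. Then there exist α, β > 0 such that x_n^α ≤ x_{n+1} ≤ x_n^β for all sufficiently large n. -/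
open Filter Topology Real

/-!
Pass to `y n = -log (x n)`, which tends to `+∞`. In logarithmic form, (i) and (ii) bound each
increment of `y` by the previous one, times `ν` or `μ`, up to the constant `c = 2 log C`, which is
eventually below `(μ / 2) y n`. With `β = μ / (2 (μ + 1))`, so that `(1 + μ) β = μ / 2`, a step
with `y (n + 1) < β y n` would force `y (n + 2) ≤ (1 + μ) y (n + 1) + c - μ y n < 0`; and
`y (n + 2) ≤ (1 + μ + ν) y (n + 1)` follows from whichever of (i), (ii) applies to the previous step.
-/

lemma log_sub_log_le_of_div_le_mul_rpow {a b p q C ν : ℝ} (ha : 0 < a) (hb : 0 < b) (hp : 0 < p)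
    (hq : 0 < q) (hC : C ≠ 0) (h : a / b ≤ C ^ 2 * (p / q) ^ ν) :
    log a - log b ≤ 2 * log C + ν * (log p - log q) := by
  have hlog := log_le_log (div_pos ha hb) h
  rwa [log_div ha.ne' hb.ne', log_mul (by positivity) (by positivity), log_pow,
    log_rpow (by positivity), log_div hp.ne' hq.ne', Nat.cast_ofNat] at hlog

lemma le_log_sub_log_of_mul_rpow_le_div {a b p q C μ : ℝ} (ha : 0 < a) (hb : 0 < b) (hp : 0 < p)
    (hq : 0 < q) (hC : C ≠ 0) (h : 1 / C ^ 2 * (p / q) ^ μ ≤ a / b) :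
    -(2 * log C) + μ * (log p - log q) ≤ log a - log b := by
  have hlog := log_le_log (by positivity) h
  rwa [log_div ha.ne' hb.ne', log_mul (by positivity) (by positivity), one_div, log_inv, log_pow,
    log_rpow (by positivity), log_div hp.ne' hq.ne', Nat.cast_ofNat] at hlog

section Steps

variable {μ ν c a b d : ℝ}

lemma le_mul_of_steps (hμ : 0 ≤ μ) (hν : 0 ≤ ν) (ha : 0 ≤ a) (hb : 0 ≤ b) (hc : c ≤ μ / 2 * b)
    (hup : a ≤ b → d - b ≤ c + ν * (b - a)) (hdown : b ≤ a → -c + μ * (a - b) ≤ b - d) :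
    d ≤ (1 + μ + ν) * b := by
  rcases le_total a b with hab | hba
  · nlinarith [hup hab]
  · nlinarith [hdown hba]

lemma mul_le_of_step (hμ : 0 < μ) (ha : 0 < a) (hd : 0 < d) (hc : c < μ / 2 * a)
    (hdown : b ≤ a → -c + μ * (a - b) ≤ b - d) :
    μ / (2 * (μ + 1)) * a ≤ b := by
  have hβ : (1 + μ) * (μ / (2 * (μ + 1))) = μ / 2 := by field_simp; ring
  set β := μ / (2 * (μ + 1))
  have hβ1 : β < 1 := by rw [div_lt_one (by positivity)]; linarith
  by_contra! hb
  have hba : b ≤ a := by nlinarith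
  nlinarith [hdown hba]

end Steps

theorem eventually_mul_le_and_le_mul_of_steps {y : ℕ → ℝ} {μ ν c : ℝ} {n₀ : ℕ} (hμ : 0 < μ)
    (hν : 0 ≤ ν) (hy : Tendsto y atTop atTop)
    (hup : ∀ n, n₀ ≤ n → y n ≤ y (n + 1) → y (n + 2) - y (n + 1) ≤ c + ν * (y (n + 1) - y n))
    (hdown : ∀ n, n₀ ≤ n → y (n + 1) ≤ y n → -c + μ * (y n - y (n + 1)) ≤ y (n + 1) - y (n + 2)) :
    ∀ᶠ n in atTop, μ / (2 * (μ + 1)) * y n ≤ y (n + 1) ∧ y (n + 1) ≤ (1 + μ + ν) * y n := by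
  have hlarge : ∀ᶠ n in atTop, n₀ ≤ n ∧ 0 < y n ∧ c < μ / 2 * y n :=
    (eventually_ge_atTop n₀).and ((hy.eventually_gt_atTop 0).and
      ((hy.const_mul_atTop (by positivity)).eventually_gt_atTop c))
  rw [← map_add_atTop_eq_nat 1, eventually_map]
  filter_upwards [hlarge, (tendsto_add_atTop_nat 1).eventually hlarge,
    (tendsto_add_atTop_nat 3).eventually hlarge] with m ⟨hm, hy₀, _⟩ ⟨_, hy₁, hc₁⟩ ⟨_, hy₃, _⟩
  exact ⟨mul_le_of_step hμ hy₁ hy₃ hc₁ (hdown (m + 1) (by omega)),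
    le_mul_of_steps hμ.le hν hy₀.le hy₁.le hc₁.le (hup m hm) (hdown m hm)⟩

theorem stmt_14 (x : ℕ → ℝ) (hpos : ∀ n, 0 < x n)
    (hlim : Tendsto x atTop (𝓝 0))
    (μ ν C : ℝ) (hμ : 0 < μ) (hν : 0 < ν) (hC : 1 < C) (n₀ : ℕ)
    (h1 : ∀ n : ℕ, n₀ ≤ n → x (n + 1) ≤ x n →
      x (n + 1) / x (n + 2) ≤ C ^ 2 * (x n / x (n + 1)) ^ ν)
    (h2 : ∀ n : ℕ, n₀ ≤ n → x n ≤ x (n + 1) →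
      (1 / C ^ 2) * (x (n + 1) / x n) ^ μ ≤ x (n + 2) / x (n + 1)) :
    ∃ α β : ℝ, 0 < α ∧ 0 < β ∧
      ∀ᶠ n in atTop, x n ^ α ≤ x (n + 1) ∧ x (n + 1) ≤ x n ^ β := by
  have hC₀ : C ≠ 0 := by positivity
  have hy : Tendsto (fun n ↦ -log (x n)) atTop atTop :=
    tendsto_neg_atBot_atTop.comp <| tendsto_log_nhdsGT_zero.comp <|
      tendsto_nhdsWithin_iff.mpr ⟨hlim, .of_forall hpos⟩
  have hsteps := eventually_mul_le_and_le_mul_of_steps (c := 2 * log C) hμ hν.le hy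
    (fun n hn hle ↦ by
      have := log_sub_log_le_of_div_le_mul_rpow (hpos _) (hpos _) (hpos _) (hpos _) hC₀
        (h1 n hn ((log_le_log_iff (hpos _) (hpos _)).mp (neg_le_neg_iff.mp hle)))
      linarith)
    (fun n hn hle ↦ by
      have := le_log_sub_log_of_mul_rpow_le_div (hpos _) (hpos _) (hpos _) (hpos _) hC₀
        (h2 n hn ((log_le_log_iff (hpos _) (hpos _)).mp (neg_le_neg_iff.mp hle)))
      linarith)
  refine ⟨1 + μ + ν, μ / (2 * (μ + 1)), by positivity, by positivity, ?_⟩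
  filter_upwards [hsteps] with n ⟨hlower, hupper⟩
  rw [rpow_le_iff_le_log (hpos _) (hpos _), le_rpow_iff_log_le (hpos _) (hpos _)]
  constructor <;> linarith
end

section
/- Define x_0 = 1/2 and x_n = x_{n−1}/2 for n even, x_n = x_{n−1}² for n odd (n ≥ 1). Then x_n² ≤ x_{n+1} ≤ x_n for all n ≥ 0, but there is no constant C > 1 and exponent ν > 0 such that x_{n+1}/x_{n+2} ≤ C²(x_n/x_{n+1})^ν holds for all sufficiently large n. -/
/-! Since every term is at most `1/2`, the squaring step also at least halves, so `x n ≤ 2⁻¹ ^ (n + 1)`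
and `x n → 0`. At an odd index `n` the next step halves and the one after squares, so
`x n / x (n + 1) = 2` while `x (n + 1) / x (n + 2) = (x (n + 1))⁻¹ → ∞`: the right-hand side of the
ratio inequality stays equal to `C ^ 2 * 2 ^ ν` while the left-hand side is unbounded. -/

open Filter Topology

lemma sq_le_half_self {a : ℝ} (ha : 0 ≤ a) (ha' : a ≤ 1 / 2) : a ^ 2 ≤ a / 2 := by
  nlinarith

namespace HalveOrSquare

variable {x : ℕ → ℝ} (hrec : ∀ n : ℕ, x (n + 1) = if Even (n + 1) then x n / 2 else (x n) ^ 2)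
include hrec

lemma succ_of_even {n : ℕ} (hn : Even (n + 1)) : x (n + 1) = x n / 2 := by
  rw [hrec, if_pos hn]

lemma succ_of_not_even {n : ℕ} (hn : ¬Even (n + 1)) : x (n + 1) = x n ^ 2 := by
  rw [hrec, if_neg hn]

lemma step_bounds {n : ℕ} (hpos : 0 < x n) (hle : x n ≤ 1 / 2) :
    0 < x (n + 1) ∧ x n ^ 2 ≤ x (n + 1) ∧ x (n + 1) ≤ x n / 2 := by
  have hsq := sq_le_half_self hpos.le hle
  by_cases hn : Even (n + 1)
  · rw [succ_of_even hrec hn]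
    exact ⟨by positivity, hsq, le_rfl⟩
  · rw [succ_of_not_even hrec hn]
    exact ⟨by positivity, le_rfl, hsq⟩

lemma pos_and_le_pow (h0 : x 0 = 1 / 2) (n : ℕ) : 0 < x n ∧ x n ≤ (1 / 2) ^ (n + 1) := by
  induction n with
  | zero => norm_num [h0]
  | succ n ih =>
    have hle : x n ≤ 1 / 2 := ih.2.trans (pow_le_of_le_one (by norm_num) (by norm_num) n.succ_ne_zero)
    obtain ⟨hpos, -, hhalf⟩ := step_bounds hrec ih.1 hle
    refine ⟨hpos, hhalf.trans ?_⟩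
    rw [pow_succ _ (n + 1)]
    linarith [ih.2]

lemma pos_and_le_half (h0 : x 0 = 1 / 2) (n : ℕ) : 0 < x n ∧ x n ≤ 1 / 2 := by
  obtain ⟨hpos, hle⟩ := pos_and_le_pow hrec h0 n
  exact ⟨hpos, hle.trans (pow_le_of_le_one (by norm_num) (by norm_num) n.succ_ne_zero)⟩

lemma tendsto_inv_atTop (h0 : x 0 = 1 / 2) : Tendsto (fun n ↦ (x n)⁻¹) atTop atTop := by
  have hx : Tendsto x atTop (𝓝 0) :=
    squeeze_zero (fun n ↦ (pos_and_le_pow hrec h0 n).1.le) (fun n ↦ (pos_and_le_pow hrec h0 n).2)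
      ((tendsto_pow_atTop_nhds_zero_of_lt_one (by norm_num) (by norm_num)).comp
        (tendsto_add_atTop_nat 1))
  exact tendsto_inv_nhdsGT_zero.comp <| tendsto_nhdsWithin_iff.2
    ⟨hx, Eventually.of_forall fun n ↦ (pos_and_le_pow hrec h0 n).1⟩

lemma ratios_of_even_succ {n : ℕ} (hn : Even (n + 1)) (hpos : 0 < x n) :
    x n / x (n + 1) = 2 ∧ x (n + 1) / x (n + 2) = (x (n + 1))⁻¹ := by
  have hsq : x (n + 2) = x (n + 1) ^ 2 := succ_of_not_even hrec (Nat.even_add_one.not.2 (not_not.2 hn))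
  rw [succ_of_even hrec hn] at hsq ⊢
  constructor
  · field_simp
  · rw [hsq]
    field_simp

end HalveOrSquare

open HalveOrSquare in
theorem stmt_15 (x : ℕ → ℝ) (h0 : x 0 = 1 / 2)
    (hrec : ∀ n : ℕ, x (n + 1) = if Even (n + 1) then x n / 2 else (x n) ^ 2) :
    (∀ n : ℕ, (x n) ^ 2 ≤ x (n + 1) ∧ x (n + 1) ≤ x n) ∧
      ¬ ∃ C : ℝ, 1 < C ∧ ∃ ν : ℝ, 0 < ν ∧
        ∀ᶠ n in atTop, x (n + 1) / x (n + 2) ≤ C ^ 2 * (x n / x (n + 1)) ^ ν := by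
  refine ⟨fun n ↦ ?_, ?_⟩
  · obtain ⟨hpos, hle⟩ := pos_and_le_half hrec h0 n
    obtain ⟨-, hsq, hhalf⟩ := step_bounds hrec hpos hle
    exact ⟨hsq, hhalf.trans (half_le_self hpos.le)⟩
  rintro ⟨C, -, ν, -, hev⟩
  have hodd : Tendsto (fun k : ℕ ↦ 2 * k + 1) atTop atTop :=
    tendsto_atTop_atTop.2 fun b ↦ ⟨b, fun k hk ↦ by omega⟩
  have hinv := (tendsto_inv_atTop hrec h0).comp ((tendsto_add_atTop_nat 1).comp hodd)
  obtain ⟨k, hratio, hbig⟩ :=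
    ((hodd.eventually hev).and (hinv.eventually_gt_atTop (C ^ 2 * 2 ^ ν))).exists
  obtain ⟨h1, h2⟩ :=
    ratios_of_even_succ hrec (n := 2 * k + 1) ⟨k + 1, by ring⟩ (pos_and_le_pow hrec h0 _).1
  simp only [Function.comp_apply, h1, h2] at hratio hbig
  linarith
end

section
/- Suppose f : ℂ → ℂ satisfies a Hölder condition |f(x) − f(y)| ≤ C|x−y|^α on a disc {|z| < r} about 0, for some α ∈ (0,1], C > 0, r > 0. Define z_{3m} = e^{−(m+2)}, z_{3m+1} = e^{−(m+2)} − e^{−(m+2)²}, z_{3m+2} = −e^{−(m+2)}/2 for m ≥ 0. Then f cannot realise the sequence (z_n): there is no such f with f(z_n) = z_{n+1} for all n. -/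
open Filter Topology

theorem stmt_16 (z : ℕ → ℂ)
    (hz0 : ∀ m : ℕ, z (3 * m) = (Real.exp (-((m : ℝ) + 2)) : ℝ))
    (hz1 : ∀ m : ℕ, z (3 * m + 1) =
      ((Real.exp (-((m : ℝ) + 2)) - Real.exp (-((m : ℝ) + 2) ^ 2)) : ℝ))
    (hz2 : ∀ m : ℕ, z (3 * m + 2) = -((Real.exp (-((m : ℝ) + 2)) : ℝ) : ℂ) / 2)
    (f : ℂ → ℂ) (α C r : ℝ) (hα0 : 0 < α) (hα1 : α ≤ 1) (hC : 0 < C) (hr : 0 < r)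
    (hHolder : ∀ x y : ℂ, ‖x‖ < r → ‖y‖ < r →
      ‖f x - f y‖ ≤ C * (‖x - y‖) ^ α) :
    ¬ ∀ n : ℕ, f (z n) = z (n + 1) := by
  intro h
  set t : ℕ → ℝ := fun m => (m : ℝ) + 2 with ht
  have ht2 : ∀ m, (2:ℝ) ≤ t m := fun m => by
    have : (0:ℝ) ≤ (m:ℝ) := Nat.cast_nonneg m
    simp only [ht]; linarith
  have htt : Tendsto t atTop atTop :=
    tendsto_atTop_add_const_right _ 2 tendsto_natCast_atTop_atTop
  have hE : ∀ m, (0:ℝ) < Real.exp (-(t m)) := fun m => Real.exp_pos _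
  have hmono : ∀ m, Real.exp (-(t m)^2) ≤ Real.exp (-(t m)) := by
    intro m
    apply Real.exp_le_exp.2
    nlinarith [ht2 m]
  -- exp(-(t m)) tends to 0
  have hexp0 : Tendsto (fun m => Real.exp (-(t m))) atTop (𝓝 0) :=
    Real.tendsto_exp_atBot.comp (tendsto_neg_atTop_atBot.comp htt)
  have hsmall : ∀ᶠ m in atTop, Real.exp (-(t m)) < r :=
    hexp0.eventually_lt_const hr
  have key : ∀ᶠ m in atTop,
      (3/2 : ℝ) - Real.exp (t m - (t m)^2) ≤ C * Real.exp (t m - (t m)^2 * α) := by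
    filter_upwards [hsmall] with m hm
    have hx : ‖z (3*m)‖ < r := by
      rw [hz0 m, Complex.norm_real, Real.norm_eq_abs, abs_of_pos (Real.exp_pos _)]
      exact hm
    have hy : ‖z (3*m+1)‖ < r := by
      rw [hz1 m]
      rw [Complex.norm_real, Real.norm_eq_abs]
      calc |Real.exp (-((m:ℝ)+2)) - Real.exp (-((m:ℝ)+2)^2)|
          ≤ Real.exp (-((m:ℝ)+2)) := by
            rw [abs_sub_le_iff]
            constructor
            · nlinarith [Real.exp_pos (-((m:ℝ)+2)^2)]
            · nlinarith [hmono m, Real.exp_pos (-((m:ℝ)+2))]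
        _ < r := hm
    have hH := hHolder (z (3*m)) (z (3*m+1)) hx hy
    rw [h (3*m), h (3*m+1)] at hH
    have e1 : z (3*m) - z (3*m+1) = ((Real.exp (-(t m)^2) : ℝ) : ℂ) := by
      rw [hz0 m, hz1 m, ← Complex.ofReal_sub, Complex.ofReal_inj]; ring
    have e2 : z (3*m+1) - z (3*m+1+1) =
        ((3/2 * Real.exp (-(t m)) - Real.exp (-(t m)^2) : ℝ) : ℂ) := by
      have : (3*m+1+1) = 3*m+2 := rfl
      rw [hz1 m, this, hz2 m, neg_div, sub_neg_eq_add, ← Complex.ofReal_ofNat,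
        ← Complex.ofReal_div, ← Complex.ofReal_add, Complex.ofReal_inj]
      ring
    rw [e1, e2] at hH
    rw [Complex.norm_real, Complex.norm_real, Real.norm_eq_abs, Real.norm_eq_abs] at hH
    rw [abs_of_nonneg (by nlinarith [hmono m, hE m] : (0:ℝ) ≤ 3/2 * Real.exp (-(t m)) - Real.exp (-(t m)^2)),
        abs_of_pos (Real.exp_pos _)] at hH
    have hrpow : (Real.exp (-(t m)^2)) ^ α = Real.exp (-(t m)^2 * α) := by
      rw [Real.rpow_def_of_pos (Real.exp_pos _), Real.log_exp]
    rw [hrpow] at hH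
    -- now divide by exp(-(t m))
    rw [← mul_le_mul_iff_of_pos_right (hE m)]
    have h1 : Real.exp (t m - (t m)^2) * Real.exp (-(t m)) = Real.exp (-(t m)^2) := by
      rw [← Real.exp_add]; ring_nf
    have h2 : Real.exp (t m - (t m)^2 * α) * Real.exp (-(t m)) = Real.exp (-(t m)^2 * α) := by
      rw [← Real.exp_add]; ring_nf
    rw [sub_mul, h1, mul_assoc, h2]
    linarith [hH]
  -- limits
  have hA : Tendsto (fun m => (3/2 : ℝ) - Real.exp (t m - (t m)^2)) atTop (𝓝 (3/2)) := by
    have hexp : Tendsto (fun m => Real.exp (t m - (t m)^2)) atTop (𝓝 0) := by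
      apply Real.tendsto_exp_atBot.comp
      apply tendsto_atBot_mono (fun m => ?_) (tendsto_neg_atTop_atBot.comp htt)
      show t m - (t m)^2 ≤ -(t m)
      nlinarith [ht2 m]
    simpa using tendsto_const_nhds.sub hexp
  have hB : Tendsto (fun m => C * Real.exp (t m - (t m)^2 * α)) atTop (𝓝 0) := by
    have hexp : Tendsto (fun m => Real.exp (t m - (t m)^2 * α)) atTop (𝓝 0) := by
      apply Real.tendsto_exp_atBot.comp
      apply tendsto_atBot_mono' atTop ?_ (tendsto_neg_atTop_atBot.comp htt)
      filter_upwards [htt.eventually_ge_atTop (2/α)] with m hm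
      show t m - (t m)^2 * α ≤ -(t m)
      have h2a : 2 ≤ α * t m := by
        rw [div_le_iff₀ hα0] at hm; linarith
      nlinarith [ht2 m]
    simpa using tendsto_const_nhds.mul hexp
  have : (3/2 : ℝ) ≤ 0 := le_of_tendsto_of_tendsto hA hB key
  linarith
end

section
/- Let g, θ : ℝ → ℝ be differentiable with g'(x) > 0, and define φ : ℂ → ℂ by φ(x + iy) = g(x) + i(y + θ(x)). Then the squared modulus of the complex dilatation satisfies |μ_φ(x+iy)|² = ((g'(x)−1)² + θ'(x)²) / ((g'(x)+1)² + θ'(x)²), and the condition |μ_φ| ≤ √(1−ε) for some ε > 0 is equivalent to the existence of L > 0 with g'(x) + 1/g'(x) + θ'(x)²/g'(x) ≤ L for all x. -/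
open Filter Topology Complex

/-- The complex dilatation `μ_φ = (∂φ/∂z̄)/(∂φ/∂z)` of a real-differentiable map
`φ : ℂ → ℂ`, expressed via the partial derivatives `∂φ/∂x = Dφ(1)` and
`∂φ/∂y = Dφ(i)`:
`μ_φ = (∂φ/∂x + i ∂φ/∂y)/(∂φ/∂x − i ∂φ/∂y)`. -/
noncomputable def complexDilatation (φ : ℂ → ℂ) (z : ℂ) : ℂ :=
  (fderiv ℝ φ z 1 + Complex.I * fderiv ℝ φ z Complex.I) /
    (fderiv ℝ φ z 1 - Complex.I * fderiv ℝ φ z Complex.I)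

noncomputable def Dmap17 (a b : ℝ) : ℂ →L[ℝ] ℂ :=
  ((a : ℂ) + Complex.I * b) • (Complex.ofRealCLM.comp Complex.reCLM) +
    Complex.I • (Complex.ofRealCLM.comp Complex.imCLM)

lemma hasfd17 (g θ : ℝ → ℝ) (hg : Differentiable ℝ g) (hθ : Differentiable ℝ θ) (z : ℂ) :
    HasFDerivAt (fun z : ℂ => ((g z.re : ℂ) + Complex.I * ((z.im : ℂ) + (θ z.re : ℂ))))
      (Dmap17 (deriv g z.re) (deriv θ z.re)) z := by
  have hre : HasFDerivAt (fun z : ℂ => z.re) Complex.reCLM z := Complex.reCLM.hasFDerivAt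
  have him : HasFDerivAt (fun z : ℂ => z.im) Complex.imCLM z := Complex.imCLM.hasFDerivAt
  have hg1 : HasFDerivAt (fun z : ℂ => (g z.re : ℂ))
      (Complex.ofRealCLM.comp ((deriv g z.re) • Complex.reCLM)) z :=
    Complex.ofRealCLM.hasFDerivAt.comp z (((hg z.re).hasDerivAt.comp_hasFDerivAt z hre))
  have hθ1 : HasFDerivAt (fun z : ℂ => (θ z.re : ℂ))
      (Complex.ofRealCLM.comp ((deriv θ z.re) • Complex.reCLM)) z :=
    Complex.ofRealCLM.hasFDerivAt.comp z (((hθ z.re).hasDerivAt.comp_hasFDerivAt z hre))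
  have him1 : HasFDerivAt (fun z : ℂ => (z.im : ℂ))
      (Complex.ofRealCLM.comp Complex.imCLM) z :=
    Complex.ofRealCLM.hasFDerivAt.comp z him
  have h2 := ((him1.add hθ1).const_mul Complex.I)
  have h3 := hg1.add h2
  refine h3.congr_fderiv ?_
  ext w
  simp [Dmap17]
  ring

theorem stmt_17 (g θ : ℝ → ℝ) (hg : Differentiable ℝ g) (hθ : Differentiable ℝ θ)
    (hg' : ∀ x : ℝ, 0 < deriv g x)
    (φ : ℂ → ℂ)
    (hφ : φ = fun z => ((g z.re : ℂ) + Complex.I * ((z.im : ℂ) + (θ z.re : ℂ)))) :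
    (∀ z : ℂ, (‖complexDilatation φ z‖) ^ 2 =
        ((deriv g z.re - 1) ^ 2 + (deriv θ z.re) ^ 2) /
          ((deriv g z.re + 1) ^ 2 + (deriv θ z.re) ^ 2)) ∧
      ((∃ ε : ℝ, 0 < ε ∧ ∀ z : ℂ,
          ‖complexDilatation φ z‖ ≤ Real.sqrt (1 - ε)) ↔
        (∃ L : ℝ, 0 < L ∧ ∀ x : ℝ,
          deriv g x + 1 / deriv g x + (deriv θ x) ^ 2 / deriv g x ≤ L)) := by
  -- the key formula
  have key : ∀ z : ℂ, (‖complexDilatation φ z‖) ^ 2 =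
      ((deriv g z.re - 1) ^ 2 + (deriv θ z.re) ^ 2) /
        ((deriv g z.re + 1) ^ 2 + (deriv θ z.re) ^ 2) := by
    intro z
    have hfd : fderiv ℝ φ z = Dmap17 (deriv g z.re) (deriv θ z.re) := by
      rw [hφ]; exact (hasfd17 g θ hg hθ z).fderiv
    set a := deriv g z.re
    set b := deriv θ z.re
    have h1 : Dmap17 a b 1 = (a:ℂ) + Complex.I * b := by simp [Dmap17]
    have h2 : Dmap17 a b Complex.I = Complex.I := by simp [Dmap17]
    rw [complexDilatation, hfd, h1, h2]
    have hnum : (a:ℂ) + Complex.I * b + Complex.I * Complex.I = ((a - 1 : ℝ):ℂ) + Complex.I * b := by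
      simp [Complex.I_mul_I]; ring
    have hden : (a:ℂ) + Complex.I * b - Complex.I * Complex.I = ((a + 1 : ℝ):ℂ) + Complex.I * b := by
      simp [Complex.I_mul_I]; ring
    rw [hnum, hden, norm_div, div_pow, Complex.sq_norm, Complex.sq_norm]
    have hre : ∀ c : ℝ, Complex.normSq (((c:ℝ):ℂ) + Complex.I * b) = c^2 + b^2 := by
      intro c; simp [Complex.normSq_apply]; ring
    rw [hre, hre]
  refine ⟨key, ?_, ?_⟩
  · -- forward
    rintro ⟨ε, hε, hle⟩
    set ε' : ℝ := min ε 1 with hε'def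
    have hε'pos : 0 < ε' := lt_min hε one_pos
    have hε'le : ε' ≤ 1 := min_le_right _ _
    refine ⟨4 / ε' - 2, by nlinarith [div_le_div_of_nonneg_left (by norm_num : (0:ℝ) ≤ 4) hε'pos hε'le, (by rw [div_one] : (4:ℝ)/1 = 4)], ?_⟩
    intro x
    have hz := hle (x : ℂ)
    have hzr : ((x : ℂ)).re = x := by simp
    have hsq : (‖complexDilatation φ (x:ℂ)‖)^2 ≤ 1 - ε' := by
      have h1 : Real.sqrt (1 - ε) ≤ Real.sqrt (1 - ε') :=
        Real.sqrt_le_sqrt (by have := min_le_left ε 1; simp only [hε'def]; linarith)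
      have h2 : ‖complexDilatation φ (x:ℂ)‖ ≤ Real.sqrt (1 - ε') := le_trans hz h1
      calc (‖complexDilatation φ (x:ℂ)‖)^2
          ≤ (Real.sqrt (1 - ε'))^2 := by
            apply pow_le_pow_left₀ (norm_nonneg _) h2
        _ = 1 - ε' := Real.sq_sqrt (by linarith)
    rw [key, hzr] at hsq
    set a := deriv g x with hadef
    set b := deriv θ x with hbdef
    have ha : 0 < a := hg' x
    have hd : 0 < (a + 1)^2 + b^2 := by positivity
    rw [div_le_iff₀ hd] at hsq
    have h4 : ε' * ((a + 1)^2 + b^2) ≤ 4 * a := by nlinarith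
    have hsplit : a + 1/a + b^2/a = (a^2 + 1 + b^2)/a := by field_simp
    rw [hsplit, div_le_iff₀ ha, sub_mul, div_mul_eq_mul_div, le_sub_iff_add_le,
      le_div_iff₀ hε'pos]
    nlinarith
  · -- backward
    rintro ⟨L, hL, hQ⟩
    have hL2 : 2 ≤ L := by
      have hQ0 := hQ 0
      have ha := hg' 0
      have hsplit : deriv g 0 + 1/deriv g 0 + (deriv θ 0)^2/deriv g 0
          = ((deriv g 0)^2 + 1 + (deriv θ 0)^2)/deriv g 0 := by field_simp
      rw [hsplit, div_le_iff₀ ha] at hQ0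
      nlinarith [sq_nonneg (deriv g 0 - 1), sq_nonneg (deriv θ 0)]
    refine ⟨4 / (L + 2), by positivity, ?_⟩
    intro z
    have hsq : (‖complexDilatation φ z‖)^2 ≤ 1 - 4 / (L + 2) := by
      rw [key]
      set a := deriv g z.re with hadef
      set b := deriv θ z.re with hbdef
      have ha : 0 < a := hg' z.re
      have hd : 0 < (a + 1)^2 + b^2 := by positivity
      have hQz := hQ z.re
      rw [← hadef, ← hbdef] at hQz
      have hQz' : a^2 + 1 + b^2 ≤ L * a := by
        have hsplit : a + 1/a + b^2/a = (a^2 + 1 + b^2)/a := by field_simp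
        rw [hsplit, div_le_iff₀ ha] at hQz
        exact hQz
      rw [div_le_iff₀ hd]
      have hL2' : 0 < L + 2 := by linarith
      have hrw : (1 : ℝ) - 4 / (L + 2) = (L - 2) / (L + 2) := by field_simp; ring
      rw [hrw, div_mul_eq_mul_div, le_div_iff₀ hL2']
      nlinarith
    have habs : 0 ≤ ‖complexDilatation φ z‖ := norm_nonneg _
    calc ‖complexDilatation φ z‖
        = Real.sqrt ((‖complexDilatation φ z‖)^2) := (Real.sqrt_sq habs).symm
      _ ≤ Real.sqrt (1 - 4 / (L + 2)) := Real.sqrt_le_sqrt hsq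
end

section
/- Suppose f : ℂ → ℂ is continuous, f(0) = 0, and there exist constants C > 1, μ, ν, r₀ > 0 such that for all T ∈ (0,1] and r ∈ (0,r₀): T^{−μ} ≤ M(r)/m(Tr) ≤ C²T^{−ν} and (1/C²)T^{−μ} ≤ m(r)/M(Tr) ≤ T^{−ν}, where M(r) = max_{|x|=r}|f(x)| and m(r) = min_{|x|=r}|f(x)|. If (z_n) is a sequence realised by f (f(z_n) = z_{n+1}) tending to 0 with z_n ≠ 0, then for all sufficiently large n with |z_n| ≥ |z_{n+1}| one has (1/C²)(|z_n|/|z_{n+1}|)^μ ≤ |z_{n+1}|/|z_{n+2}| ≤ C²(|z_n|/|z_{n+1}|)^ν. -/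
open Filter Topology

theorem stmt_19 (f : ℂ → ℂ) (hf : Continuous f) (hf0 : f 0 = 0)
    (C μ ν r₀ : ℝ) (hC : 1 < C) (hμ : 0 < μ) (hν : 0 < ν) (hr₀ : 0 < r₀)
    (M m : ℝ → ℝ)
    (hM : M = fun r => sSup ((fun x => ‖f x‖) '' Metric.sphere (0 : ℂ) r))
    (hm : m = fun r => sInf ((fun x => ‖f x‖) '' Metric.sphere (0 : ℂ) r))
    (hmod : ∀ T r : ℝ, 0 < T → T ≤ 1 → 0 < r → r < r₀ →
      (T ^ (-μ) ≤ M r / m (T * r) ∧ M r / m (T * r) ≤ C ^ 2 * T ^ (-ν) ∧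
        (1 / C ^ 2) * T ^ (-μ) ≤ m r / M (T * r) ∧ m r / M (T * r) ≤ T ^ (-ν)))
    (z : ℕ → ℂ) (hreal : ∀ n : ℕ, f (z n) = z (n + 1))
    (hlim : Tendsto z atTop (𝓝 0)) (hne : ∀ n, z n ≠ 0) :
    ∃ N : ℕ, ∀ n : ℕ, N ≤ n → ‖z (n + 1)‖ ≤ ‖z n‖ →
      (1 / C ^ 2) * (‖z n‖ / ‖z (n + 1)‖) ^ μ ≤
          ‖z (n + 1)‖ / ‖z (n + 2)‖ ∧
        ‖z (n + 1)‖ / ‖z (n + 2)‖ ≤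
          C ^ 2 * (‖z n‖ / ‖z (n + 1)‖) ^ ν := by
  -- basic facts about M and m
  have habs : Continuous fun x => ‖f x‖ := continuous_norm.comp hf
  have hmem : ∀ w : ℂ, ‖f w‖ ∈
      (fun x => ‖f x‖) '' Metric.sphere (0 : ℂ) ‖w‖ := by
    intro w
    exact ⟨w, by simp [Complex.dist_eq], rfl⟩
  have hMle : ∀ w : ℂ, ‖f w‖ ≤ M ‖w‖ := by
    intro w
    rw [hM]
    exact le_csSup ((isCompact_sphere 0 _).image habs).bddAbove (hmem w)
  have hmle : ∀ w : ℂ, m ‖w‖ ≤ ‖f w‖ := by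
    intro w
    rw [hm]
    exact csInf_le ⟨0, fun y ⟨x, _, hx⟩ => hx ▸ norm_nonneg _⟩ (hmem w)
  have hmnn : ∀ r : ℝ, 0 ≤ m r := by
    intro r
    rw [hm]
    rcases Set.eq_empty_or_nonempty ((fun x => ‖f x‖) '' Metric.sphere (0 : ℂ) r) with h | h
    · simp [h, Real.sInf_empty]
    · exact le_csInf h (fun y ⟨x, _, hx⟩ => hx ▸ norm_nonneg _)
  -- choose N
  have := Metric.tendsto_atTop.mp hlim r₀ hr₀
  obtain ⟨N, hN⟩ := this
  refine ⟨N, fun n hn hdec => ?_⟩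
  set a := ‖z n‖ with ha
  set b := ‖z (n + 1)‖ with hb
  set c := ‖z (n + 2)‖ with hc
  have ha0 : 0 < a := norm_pos_iff.mpr (hne n)
  have hb0 : 0 < b := norm_pos_iff.mpr (hne (n + 1))
  have hc0 : 0 < c := norm_pos_iff.mpr (hne (n + 2))
  have har : a < r₀ := by
    have := hN n hn
    simpa [Complex.dist_eq, ha] using this
  have hT0 : 0 < b / a := div_pos hb0 ha0
  have hT1 : b / a ≤ 1 := (div_le_one ha0).mpr hdec
  have hTa : b / a * a = b := div_mul_cancel₀ b ha0.ne'
  obtain ⟨h1, h2, h3, h4⟩ := hmod (b / a) a hT0 hT1 ha0 har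
  rw [hTa] at h1 h2 h3 h4
  -- key bounds
  have hfb : ‖f (z n)‖ = b := by rw [hreal n]
  have hfc : ‖f (z (n + 1))‖ = c := by rw [hreal (n + 1)]
  have hmab : m a ≤ b := hfb ▸ hmle (z n)
  have hMab : b ≤ M a := hfb ▸ hMle (z n)
  have hmbc : m b ≤ c := hfc ▸ hmle (z (n + 1))
  have hMbc : c ≤ M b := hfc ▸ hMle (z (n + 1))
  have hmb0 : 0 < m b := by
    rcases lt_or_eq_of_le (hmnn b) with h | h
    · exact h
    · exfalso
      have : (0:ℝ) < (b / a) ^ (-μ) := Real.rpow_pos_of_pos hT0 _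
      rw [← h] at h1
      simp at h1
      linarith
  have hMb0 : 0 < M b := lt_of_lt_of_le hc0 hMbc
  -- rewrite exponent
  have hexp : ∀ e : ℝ, (a / b) ^ e = (b / a) ^ (-e) := by
    intro e
    rw [Real.rpow_neg hT0.le, ← Real.inv_rpow hT0.le, inv_div]
  constructor
  · rw [hexp μ]
    calc (1 / C ^ 2) * (b / a) ^ (-μ) ≤ m a / M b := h3
    _ ≤ b / M b := by gcongr
    _ ≤ b / c := by gcongr
  · rw [hexp ν]
    calc b / c ≤ M a / c := by gcongr
    _ ≤ M a / m b := by gcongr; exact hb0.le.trans hMab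
    _ ≤ C ^ 2 * (b / a) ^ (-ν) := h2
end
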